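/- arXiv:2406.17230 — 2 statements merged into one kernel-verified Lean document; each statement's English description precedes it below -/
import Mathlib

section
/- Let ρ be a separable bipartite density matrix on ℂ^{d_A}⊗ℂ^{d_B}, let x, y ≥ 0 be real numbers and n a positive integer, and let O be any complex (d_A²+n−1)×(d_B²+n−1) matrix whose operator norm (largest singular value) is at most 1. Then Re Tr(O† M_{x,y}^{(n)}) ≤ √( ((n x² + d_A − 1)/(κ_A d_A)) · ((n y² + d_B − 1)/(κ_B d_B)) ); in particular, the linear functional ρ ↦ √( ((n x² + d_A − 1)/(κ_A d_A))((n y² + d_B − 1)/(κ_B d_B)) )·Tr(ρ) − Re Tr(O† M_{x,y}^{(n)}) is nonnegative on all separable states (an entanglement witness). -/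
open Matrix BigOperators Kronecker
open scoped ComplexOrder

/-- The trace norm (sum of singular values) of a complex matrix. -/
noncomputable def traceNorm {m k : Type*} [Fintype m] [Fintype k] [DecidableEq k]
    (X : Matrix m k ℂ) : ℝ :=
  ∑ i, Real.sqrt ((Matrix.isHermitian_conjTranspose_mul_self X).eigenvalues i)

/-- A density matrix: positive semidefinite with trace one. -/
def IsDensityMatrix {d : Type*} [Fintype d] [DecidableEq d] (ρ : Matrix d d ℂ) : Prop :=
  ρ.PosSemidef ∧ ρ.trace = 1

/-- Separability of a bipartite state (finite convex mixture of product density matrices). -/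
def IsSeparableState (dA dB : ℕ)
    (ρ : Matrix (Fin dA × Fin dB) (Fin dA × Fin dB) ℂ) : Prop :=
  ∃ (N : ℕ) (p : Fin N → ℝ) (ρA : Fin N → Matrix (Fin dA) (Fin dA) ℂ)
    (ρB : Fin N → Matrix (Fin dB) (Fin dB) ℂ),
    (∀ i, 0 ≤ p i) ∧ (∑ i, p i) = 1 ∧
    (∀ i, IsDensityMatrix (ρA i)) ∧ (∀ i, IsDensityMatrix (ρB i)) ∧
    ρ = ∑ i, (p i : ℂ) • (ρA i ⊗ₖ ρB i)

/-- The extended correlation tensor `M_{x,y}^{(n)}` built from the Bloch data `r, s, T`. -/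
noncomputable def extCorrTensor (dA dB n : ℕ) (κA κB x y : ℝ)
    (r : Fin (dA ^ 2 - 1) → ℂ) (s : Fin (dB ^ 2 - 1) → ℂ)
    (T : Matrix (Fin (dA ^ 2 - 1)) (Fin (dB ^ 2 - 1)) ℂ) :
    Matrix (Fin n ⊕ Fin (dA ^ 2 - 1)) (Fin n ⊕ Fin (dB ^ 2 - 1)) ℂ :=
  Matrix.fromBlocks
    (Matrix.of fun _ _ => ((x * y / Real.sqrt (κA * κB * dA * dB) : ℝ) : ℂ))
    (Matrix.of fun _ j => ((x / Real.sqrt (κA * dA) : ℝ) : ℂ) * s j)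
    (Matrix.of fun i _ => ((y / Real.sqrt (κB * dB) : ℝ) : ℂ) * r i)
    T

/-!
Every local state has a Bloch vector `a` with `κ ‖a‖² ≤ 1 - 1/d`: this is purity, `Tr ρ² ≤ 1`.
Pairing a separable `ρ = ∑ pₗ ρₗᴬ ⊗ ρₗᴮ` with `Gᵢ† ⊗ 1`, `1 ⊗ Gⱼ†` and `Gᵢ† ⊗ Gⱼ†` identifies
`r`, `s`, `T` as the mixtures of the local Bloch vectors `aₗ`, `bₗ` and of `aₗ bₗᵀ`. Hence
`M = ∑ pₗ uₗ vₗᵀ` with `uₗ = (x/√(κ_A d_A), …, x/√(κ_A d_A), aₗ)` and similarly `vₗ`, where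
`‖uₗ‖² ≤ (n x² + d_A − 1)/(κ_A d_A)`. For a contraction `O`, Cauchy–Schwarz gives
`Re Tr(O† u vᵀ) = Re ⟨O v̄, u⟩ ≤ ‖u‖ ‖v‖`, and the bound survives the convex combination.
-/

lemma Matrix.PosSemidef.re_trace_mul_self_le_sq {a : Type*} [Fintype a] [DecidableEq a]
    {ρ : Matrix a a ℂ} (hρ : ρ.PosSemidef) :
    (ρ * ρ).trace.re ≤ ρ.trace.re ^ 2 := by
  have hsq : (ρ * ρ).trace = ((∑ i, hρ.1.eigenvalues i ^ 2 : ℝ) : ℂ) := by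
    conv_lhs => rw [hρ.1.spectral_theorem, ← map_mul, Unitary.conjStarAlgAut_apply,
      trace_mul_cycle, Unitary.coe_star_mul_self, one_mul, diagonal_mul_diagonal, trace_diagonal]
    simp [sq]
  rw [hsq, Complex.ofReal_re, hρ.1.trace_eq_sum_eigenvalues, ← RCLike.ofReal_sum]
  exact_mod_cast Finset.sum_sq_le_sq_sum_of_nonneg fun i _ => hρ.eigenvalues_nonneg i

lemma sum_norm_sumElim_ofReal_sq {m ι : Type*} [Fintype m] [Fintype ι] (α : ℝ) (c : ι → ℂ) :
    ∑ k, ‖Sum.elim (fun _ : m => (α : ℂ)) c k‖ ^ 2 = Fintype.card m * α ^ 2 + ∑ i, ‖c i‖ ^ 2 := by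
  simp [Fintype.sum_sum_type, Complex.norm_real, sq_abs]

section LocalBloch

variable {a ι : Type*} [Fintype a] [DecidableEq a] [Fintype ι] [DecidableEq ι]
  {G : ι → Matrix a a ℂ} {κ : ℝ}

noncomputable def blochVector (G : ι → Matrix a a ℂ) (κ : ℝ) (ρ : Matrix a a ℂ) (i : ι) : ℂ :=
  ((G i)ᴴ * ρ).trace / κ

lemma trace_conjTranspose_mul_sum_smul
    (horth : ∀ i j, ((G i)ᴴ * G j).trace = if i = j then (κ : ℂ) else 0) (c : ι → ℂ) (i : ι) :
    ((G i)ᴴ * ∑ j, c j • G j).trace = κ * c i := by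
  simp [Matrix.mul_sum, trace_sum, horth, mul_comm]

lemma trace_conjTranspose_sum_smul_mul_sum_smul
    (horth : ∀ i j, ((G i)ᴴ * G j).trace = if i = j then (κ : ℂ) else 0) (c : ι → ℂ) :
    ((∑ i, c i • G i)ᴴ * ∑ j, c j • G j).trace = ((κ * ∑ i, ‖c i‖ ^ 2 : ℝ) : ℂ) := by
  rw [conjTranspose_sum, Matrix.sum_mul, trace_sum]
  simp only [conjTranspose_smul, Matrix.smul_mul, trace_smul,
    trace_conjTranspose_mul_sum_smul horth, smul_eq_mul]
  push_cast
  rw [Finset.mul_sum]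
  refine Finset.sum_congr rfl fun i _ => ?_
  rw [← Complex.mul_conj', Complex.star_def]
  ring

lemma sum_norm_blochVector_sq_le [Nonempty a] (hκ : 0 < κ) (htr : ∀ i, (G i).trace = 0)
    (horth : ∀ i j, ((G i)ᴴ * G j).trace = if i = j then (κ : ℂ) else 0)
    (hspan : ∀ X : Matrix a a ℂ, X.trace = 0 → X ∈ Submodule.span ℂ (Set.range G))
    {ρ : Matrix a a ℂ} (hρ : IsDensityMatrix ρ) :
    ∑ i, ‖blochVector G κ ρ i‖ ^ 2 ≤ (Fintype.card a - 1) / (κ * Fintype.card a) := by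
  obtain ⟨hpsd, htr1⟩ := hρ
  set d : ℕ := Fintype.card a with hd_def
  have hd0 : (0 : ℝ) < d := Nat.cast_pos.2 Fintype.card_pos
  have htraceless : (ρ - (d : ℂ)⁻¹ • 1).trace = 0 := by
    rw [trace_sub, trace_smul, trace_one, htr1, smul_eq_mul, inv_mul_cancel₀ (mod_cast hd0.ne'),
      sub_self]
  obtain ⟨c, hc⟩ := (Submodule.mem_span_range_iff_exists_fun ℂ).1 (hspan _ htraceless)
  have hρc : ρ = (d : ℂ)⁻¹ • 1 + ∑ i, c i • G i := by rw [hc]; abel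
  have hcoeff : ∀ i, blochVector G κ ρ i = c i := fun i => by
    rw [blochVector, hρc, Matrix.mul_add, trace_add, trace_conjTranspose_mul_sum_smul horth,
      Matrix.mul_smul, Matrix.mul_one, trace_smul, trace_conjTranspose, htr i, star_zero,
      smul_zero, zero_add, mul_div_cancel_left₀ _ (mod_cast hκ.ne')]
  have hpurity : (ρ * ρ).trace = (((d : ℝ)⁻¹ + κ * ∑ i, ‖c i‖ ^ 2 : ℝ) : ℂ) := by
    have hS : (∑ i, c i • G i).trace = 0 := hc ▸ htraceless
    nth_rewrite 1 [← hpsd.1.eq]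
    rw [hρc, conjTranspose_add, Matrix.add_mul, Matrix.mul_add, Matrix.mul_add]
    simp only [trace_add, trace_conjTranspose_sum_smul_mul_sum_smul horth, conjTranspose_smul,
      conjTranspose_one, Matrix.smul_mul, Matrix.mul_smul, Matrix.one_mul, Matrix.mul_one,
      trace_smul, trace_conjTranspose, hS, trace_one, ← hd_def, star_zero, smul_eq_mul]
    push_cast
    field_simp
    simp
  have hle := hpsd.re_trace_mul_self_le_sq
  rw [hpurity, htr1, Complex.ofReal_re, Complex.one_re, one_pow] at hle
  simp only [hcoeff]
  rw [le_div_iff₀ (by positivity)]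
  calc (∑ i, ‖c i‖ ^ 2) * (κ * d) = (κ * ∑ i, ‖c i‖ ^ 2) * d := by ring
    _ ≤ (1 - (d : ℝ)⁻¹) * d := by gcongr; linarith
    _ = d - 1 := by field_simp

lemma sum_norm_sumElim_blochVector_sq_le [Nonempty a] (hκ : 0 < κ) (htr : ∀ i, (G i).trace = 0)
    (horth : ∀ i j, ((G i)ᴴ * G j).trace = if i = j then (κ : ℂ) else 0)
    (hspan : ∀ X : Matrix a a ℂ, X.trace = 0 → X ∈ Submodule.span ℂ (Set.range G))
    {ρ : Matrix a a ℂ} (hρ : IsDensityMatrix ρ) (m : Type*) [Fintype m] (x : ℝ) :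
    ∑ k, ‖Sum.elim (fun _ : m => ((x / √(κ * Fintype.card a) : ℝ) : ℂ)) (blochVector G κ ρ) k‖ ^ 2
      ≤ (Fintype.card m * x ^ 2 + Fintype.card a - 1) / (κ * Fintype.card a) := by
  rw [sum_norm_sumElim_ofReal_sq, div_pow, Real.sq_sqrt (by positivity)]
  calc _ ≤ Fintype.card m * (x ^ 2 / (κ * Fintype.card a))
        + (Fintype.card a - 1) / (κ * Fintype.card a) := by
        gcongr
        exact sum_norm_blochVector_sq_le hκ htr horth hspan hρ
    _ = _ := by ring

end LocalBloch

lemma Matrix.trace_kronecker_mul_kronecker {R a b : Type*} [CommSemiring R] [Fintype a]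
    [Fintype b] (A X : Matrix a a R) (B Y : Matrix b b R) :
    ((A ⊗ₖ B) * (X ⊗ₖ Y)).trace = (A * X).trace * (B * Y).trace := by
  rw [← mul_kronecker_mul, trace_kronecker]

section Bipartite

variable {a b ιA ιB : Type*} [Fintype a] [DecidableEq a] [Fintype b] [DecidableEq b]
  [Fintype ιA] [Fintype ιB] {GA : ιA → Matrix a a ℂ} {GB : ιB → Matrix b b ℂ} {κA κB : ℝ}

noncomputable def blochMatrix (GA : ιA → Matrix a a ℂ) (GB : ιB → Matrix b b ℂ) (r : ιA → ℂ)
    (s : ιB → ℂ) (T : Matrix ιA ιB ℂ) : Matrix (a × b) (a × b) ℂ :=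
  ((Fintype.card a : ℂ)⁻¹ • (1 : Matrix a a ℂ)) ⊗ₖ ((Fintype.card b : ℂ)⁻¹ • (1 : Matrix b b ℂ))
    + ∑ i, r i • (GA i ⊗ₖ ((Fintype.card b : ℂ)⁻¹ • (1 : Matrix b b ℂ)))
    + ∑ j, s j • (((Fintype.card a : ℂ)⁻¹ • (1 : Matrix a a ℂ)) ⊗ₖ GB j)
    + ∑ i, ∑ j, T i j • (GA i ⊗ₖ GB j)

variable (r : ιA → ℂ) (s : ιB → ℂ) (T : Matrix ιA ιB ℂ)

lemma trace_conjTranspose_kronecker_one_mul_blochMatrix [Nonempty b] [DecidableEq ιA]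
    (hGAtr : ∀ i, (GA i).trace = 0) (hGBtr : ∀ j, (GB j).trace = 0)
    (hGAorth : ∀ i j, ((GA i)ᴴ * GA j).trace = if i = j then (κA : ℂ) else 0) (i : ιA) :
    (((GA i)ᴴ ⊗ₖ (1 : Matrix b b ℂ)) * blochMatrix GA GB r s T).trace = κA * r i := by
  have hb : (Fintype.card b : ℂ) ≠ 0 := Nat.cast_ne_zero.2 Fintype.card_ne_zero
  simp [blochMatrix, Matrix.mul_add, Matrix.mul_sum, trace_sum, trace_kronecker_mul_kronecker,
    trace_conjTranspose, hGAtr, hGBtr, hGAorth, hb, mul_comm]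

lemma trace_one_kronecker_conjTranspose_mul_blochMatrix [Nonempty a] [DecidableEq ιB]
    (hGAtr : ∀ i, (GA i).trace = 0) (hGBtr : ∀ j, (GB j).trace = 0)
    (hGBorth : ∀ i j, ((GB i)ᴴ * GB j).trace = if i = j then (κB : ℂ) else 0) (j : ιB) :
    (((1 : Matrix a a ℂ) ⊗ₖ (GB j)ᴴ) * blochMatrix GA GB r s T).trace = κB * s j := by
  have ha : (Fintype.card a : ℂ) ≠ 0 := Nat.cast_ne_zero.2 Fintype.card_ne_zero
  simp [blochMatrix, Matrix.mul_add, Matrix.mul_sum, trace_sum, trace_kronecker_mul_kronecker,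
    trace_conjTranspose, hGAtr, hGBtr, hGBorth, ha, mul_comm]

lemma trace_conjTranspose_kronecker_conjTranspose_mul_blochMatrix
    [DecidableEq ιA] [DecidableEq ιB]
    (hGAtr : ∀ i, (GA i).trace = 0) (hGBtr : ∀ j, (GB j).trace = 0)
    (hGAorth : ∀ i j, ((GA i)ᴴ * GA j).trace = if i = j then (κA : ℂ) else 0)
    (hGBorth : ∀ i j, ((GB i)ᴴ * GB j).trace = if i = j then (κB : ℂ) else 0) (i : ιA) (j : ιB) :
    (((GA i)ᴴ ⊗ₖ (GB j)ᴴ) * blochMatrix GA GB r s T).trace = κA * κB * T i j := by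
  simp [blochMatrix, Matrix.mul_add, Matrix.mul_sum, trace_sum, trace_kronecker_mul_kronecker,
    trace_conjTranspose, hGAtr, hGBtr, hGAorth, hGBorth]
  ring

lemma blochMatrix_coeffs_of_separable [Nonempty a] [Nonempty b] [DecidableEq ιA] [DecidableEq ιB]
    (hκA : κA ≠ 0) (hκB : κB ≠ 0) (hGAtr : ∀ i, (GA i).trace = 0) (hGBtr : ∀ j, (GB j).trace = 0)
    (hGAorth : ∀ i j, ((GA i)ᴴ * GA j).trace = if i = j then (κA : ℂ) else 0)
    (hGBorth : ∀ i j, ((GB i)ᴴ * GB j).trace = if i = j then (κB : ℂ) else 0)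
    {ι : Type*} [Fintype ι] (p : ι → ℂ) (ρA : ι → Matrix a a ℂ) (ρB : ι → Matrix b b ℂ)
    (hρA : ∀ l, (ρA l).trace = 1) (hρB : ∀ l, (ρB l).trace = 1)
    (hsep : blochMatrix GA GB r s T = ∑ l, p l • (ρA l ⊗ₖ ρB l)) :
    r = ∑ l, p l • blochVector GA κA (ρA l) ∧ s = ∑ l, p l • blochVector GB κB (ρB l) ∧
      T = ∑ l, p l • vecMulVec (blochVector GA κA (ρA l)) (blochVector GB κB (ρB l)) := by
  have hmix : ∀ A B, ((A ⊗ₖ B) * blochMatrix GA GB r s T).trace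
      = ∑ l, p l * ((A * ρA l).trace * (B * ρB l).trace) := fun A B => by
    simp [hsep, Matrix.mul_sum, trace_sum, trace_kronecker_mul_kronecker]
  refine ⟨funext fun i => ?_, funext fun j => ?_, Matrix.ext fun i j => ?_⟩
  · have h := trace_conjTranspose_kronecker_one_mul_blochMatrix r s T hGAtr hGBtr hGAorth i
    rw [hmix] at h
    simp only [Finset.sum_apply, Pi.smul_apply, smul_eq_mul, blochVector, mul_div_assoc',
      ← Finset.sum_div]
    simp only [one_mul, hρB, mul_one] at h
    rw [h]
    field_simp
  · have h := trace_one_kronecker_conjTranspose_mul_blochMatrix r s T hGAtr hGBtr hGBorth j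
    rw [hmix] at h
    simp only [Finset.sum_apply, Pi.smul_apply, smul_eq_mul, blochVector, mul_div_assoc',
      ← Finset.sum_div]
    simp only [one_mul, hρA] at h
    rw [h]
    field_simp
  · have h := trace_conjTranspose_kronecker_conjTranspose_mul_blochMatrix r s T hGAtr hGBtr
      hGAorth hGBorth i j
    rw [hmix] at h
    simp only [Matrix.sum_apply, Matrix.smul_apply, vecMulVec_apply, smul_eq_mul, blochVector,
      div_mul_div_comm]
    simp only [mul_div_assoc', ← Finset.sum_div]
    rw [h]
    field_simp

end Bipartite

section Contraction

variable {m k : Type*} [Fintype m] [Fintype k] [DecidableEq k] {O : Matrix m k ℂ}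

lemma re_star_dotProduct_self (x : m → ℂ) : (star x ⬝ᵥ x).re = ∑ i, ‖x i‖ ^ 2 := by
  simp [dotProduct, Complex.sq_norm, Complex.normSq_apply]

lemma sum_norm_mulVec_sq_le (hO : (1 - Oᴴ * O).PosSemidef) (x : k → ℂ) :
    ∑ i, ‖(O *ᵥ x) i‖ ^ 2 ≤ ∑ j, ‖x j‖ ^ 2 := by
  have h := hO.re_dotProduct_nonneg x
  rw [sub_mulVec, one_mulVec, dotProduct_sub, ← mulVec_mulVec, dotProduct_mulVec, ← star_mulVec,
    RCLike.re_to_complex, Complex.sub_re, re_star_dotProduct_self, re_star_dotProduct_self] at h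
  linarith

lemma re_trace_conjTranspose_mul_vecMulVec_le (hO : (1 - Oᴴ * O).PosSemidef) (u : m → ℂ)
    (v : k → ℂ) :
    (Oᴴ * vecMulVec u v).trace.re ≤ √(∑ i, ‖u i‖ ^ 2) * √(∑ j, ‖v j‖ ^ 2) := by
  set w := O *ᵥ star v
  have htrace : (Oᴴ * vecMulVec u v).trace = ∑ i, star (w i) * u i := by
    rw [mul_vecMulVec, trace_vecMulVec, dotProduct_comm, dotProduct_mulVec, ← star_star v,
      ← star_mulVec]
    rfl
  have hw : ∑ i, ‖w i‖ ^ 2 ≤ ∑ j, ‖v j‖ ^ 2 := by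
    simpa only [Pi.star_apply, norm_star] using sum_norm_mulVec_sq_le hO (star v)
  calc (Oᴴ * vecMulVec u v).trace.re ≤ ‖∑ i, star (w i) * u i‖ := htrace ▸ Complex.re_le_norm _
    _ ≤ ∑ i, ‖u i‖ * ‖w i‖ := by
        refine (norm_sum_le _ _).trans (le_of_eq (Finset.sum_congr rfl fun i _ => ?_))
        rw [norm_mul, norm_star, mul_comm]
    _ ≤ √(∑ i, ‖u i‖ ^ 2) * √(∑ i, ‖w i‖ ^ 2) := Real.sum_mul_le_sqrt_mul_sqrt _ _ _
    _ ≤ √(∑ i, ‖u i‖ ^ 2) * √(∑ j, ‖v j‖ ^ 2) := by gcongr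

lemma re_trace_conjTranspose_mul_sum_smul_vecMulVec_le (hO : (1 - Oᴴ * O).PosSemidef)
    {ι : Type*} [Fintype ι] (p : ι → ℝ) (hp : ∀ l, 0 ≤ p l) (hp1 : ∑ l, p l = 1)
    (u : ι → m → ℂ) (v : ι → k → ℂ) {K L : ℝ} (hu : ∀ l, ∑ i, ‖u l i‖ ^ 2 ≤ K)
    (hv : ∀ l, ∑ j, ‖v l j‖ ^ 2 ≤ L) :
    (Oᴴ * ∑ l, (p l : ℂ) • vecMulVec (u l) (v l)).trace.re ≤ √K * √L := by
  rw [Matrix.mul_sum, trace_sum, Complex.re_sum]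
  calc ∑ l, (Oᴴ * ((p l : ℂ) • vecMulVec (u l) (v l))).trace.re
      = ∑ l, p l * (Oᴴ * vecMulVec (u l) (v l)).trace.re := by
        simp only [Matrix.mul_smul, trace_smul, smul_eq_mul, Complex.re_ofReal_mul]
    _ ≤ ∑ l, p l * (√K * √L) := by
        gcongr with l
        · exact hp l
        · exact (re_trace_conjTranspose_mul_vecMulVec_le hO _ _).trans
            (mul_le_mul (Real.sqrt_le_sqrt (hu l)) (Real.sqrt_le_sqrt (hv l)) (by positivity)
              (by positivity))
    _ = √K * √L := by rw [← Finset.sum_mul, hp1, one_mul]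

end Contraction

lemma fromBlocks_eq_sum_smul_vecMulVec {m m' ιA ιB ι : Type*} [Fintype ι] (p : ι → ℂ)
    (hp : ∑ l, p l = 1) (α β : ℂ) (A : ι → ιA → ℂ) (B : ι → ιB → ℂ) :
    fromBlocks (of fun (_ : m) (_ : m') => α * β) (of fun _ j => α * (∑ l, p l • B l) j)
        (of fun i _ => β * (∑ l, p l • A l) i) (∑ l, p l • vecMulVec (A l) (B l)) =
      ∑ l, p l • vecMulVec (Sum.elim (fun _ => α) (A l)) (Sum.elim (fun _ => β) (B l)) := by
  ext (i | i) (j | j) <;>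
    simp only [fromBlocks_apply₁₁, fromBlocks_apply₁₂, fromBlocks_apply₂₁, fromBlocks_apply₂₂,
      of_apply, Matrix.sum_apply, Matrix.smul_apply, Finset.sum_apply, Pi.smul_apply, smul_eq_mul,
      vecMulVec_apply, Sum.elim_inl, Sum.elim_inr, Finset.mul_sum]
  · rw [← Finset.sum_mul, hp, one_mul]
  · exact Finset.sum_congr rfl fun _ _ => by ring
  · exact Finset.sum_congr rfl fun _ _ => by ring

theorem entanglement_witness_of_separable_general
    (dA dB : ℕ) (hdA : 2 ≤ dA) (hdB : 2 ≤ dB)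
    (κA κB : ℝ) (hκA : 1 ≤ κA) (hκB : 1 ≤ κB)
    (GA : Fin (dA ^ 2 - 1) → Matrix (Fin dA) (Fin dA) ℂ)
    (GB : Fin (dB ^ 2 - 1) → Matrix (Fin dB) (Fin dB) ℂ)
    (hGAtr : ∀ i, (GA i).trace = 0)
    (hGBtr : ∀ j, (GB j).trace = 0)
    (hGAorth : ∀ i j, ((GA i)ᴴ * GA j).trace = if i = j then (κA : ℂ) else 0)
    (hGBorth : ∀ i j, ((GB i)ᴴ * GB j).trace = if i = j then (κB : ℂ) else 0)
    (hGAspan : ∀ X : Matrix (Fin dA) (Fin dA) ℂ, X.trace = 0 →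
      X ∈ Submodule.span ℂ (Set.range GA))
    (hGBspan : ∀ X : Matrix (Fin dB) (Fin dB) ℂ, X.trace = 0 →
      X ∈ Submodule.span ℂ (Set.range GB))
    (ρ : Matrix (Fin dA × Fin dB) (Fin dA × Fin dB) ℂ)
    (hρ : IsDensityMatrix ρ)
    (hsep : IsSeparableState dA dB ρ)
    (r : Fin (dA ^ 2 - 1) → ℂ) (s : Fin (dB ^ 2 - 1) → ℂ)
    (T : Matrix (Fin (dA ^ 2 - 1)) (Fin (dB ^ 2 - 1)) ℂ)
    (hexp : ρ =
      ((dA : ℂ)⁻¹ • (1 : Matrix (Fin dA) (Fin dA) ℂ)) ⊗ₖ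
        ((dB : ℂ)⁻¹ • (1 : Matrix (Fin dB) (Fin dB) ℂ))
      + ∑ i, r i • (GA i ⊗ₖ ((dB : ℂ)⁻¹ • (1 : Matrix (Fin dB) (Fin dB) ℂ)))
      + ∑ j, s j • (((dA : ℂ)⁻¹ • (1 : Matrix (Fin dA) (Fin dA) ℂ)) ⊗ₖ GB j)
      + ∑ i, ∑ j, T i j • (GA i ⊗ₖ GB j))
    (x y : ℝ) (n : ℕ)
    (O : Matrix (Fin n ⊕ Fin (dA ^ 2 - 1)) (Fin n ⊕ Fin (dB ^ 2 - 1)) ℂ)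
    (hO : ((1 : Matrix (Fin n ⊕ Fin (dB ^ 2 - 1)) (Fin n ⊕ Fin (dB ^ 2 - 1)) ℂ)
      - Oᴴ * O).PosSemidef) :
    ((Oᴴ * extCorrTensor dA dB n κA κB x y r s T).trace).re ≤
      Real.sqrt (((n * x ^ 2 + dA - 1) / (κA * dA)) * ((n * y ^ 2 + dB - 1) / (κB * dB))) ∧
    0 ≤ Real.sqrt (((n * x ^ 2 + dA - 1) / (κA * dA)) *
          ((n * y ^ 2 + dB - 1) / (κB * dB))) * (ρ.trace).re
        - ((Oᴴ * extCorrTensor dA dB n κA κB x y r s T).trace).re := by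
  have : NeZero dA := ⟨by omega⟩
  have : NeZero dB := ⟨by omega⟩
  have hκA0 : 0 < κA := by linarith
  have hκB0 : 0 < κB := by linarith
  obtain ⟨N, p, ρA, ρB, hp, hp1, hρA, hρB, hsep⟩ := hsep
  have hρM : ρ = blochMatrix GA GB r s T := by
    simpa only [blochMatrix, Fintype.card_fin] using hexp
  obtain ⟨rfl, rfl, rfl⟩ := blochMatrix_coeffs_of_separable r s T hκA0.ne' hκB0.ne' hGAtr hGBtr
    hGAorth hGBorth (fun l => (p l : ℂ)) ρA ρB (fun l => (hρA l).2) (fun l => (hρB l).2)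
    (hρM ▸ hsep)
  have hcoeff : (((x * y / √(κA * κB * dA * dB)) : ℝ) : ℂ)
      = ((x / √(κA * dA) : ℝ) : ℂ) * ((y / √(κB * dB) : ℝ) : ℂ) := by
    rw [show κA * κB * dA * dB = (κA * dA) * (κB * dB) by ring, Real.sqrt_mul (by positivity),
      ← Complex.ofReal_mul, div_mul_div_comm]
  have hu := fun l =>
    sum_norm_sumElim_blochVector_sq_le hκA0 hGAtr hGAorth hGAspan (hρA l) (Fin n) x
  have hv := fun l =>
    sum_norm_sumElim_blochVector_sq_le hκB0 hGBtr hGBorth hGBspan (hρB l) (Fin n) y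
  simp only [Fintype.card_fin] at hu hv
  have hbound := re_trace_conjTranspose_mul_sum_smul_vecMulVec_le hO p hp hp1 _ _ hu hv
  have hdA1 : (0 : ℝ) ≤ dA - 1 := sub_nonneg.2 (by exact_mod_cast (by omega : 1 ≤ dA))
  rw [extCorrTensor, hcoeff, fromBlocks_eq_sum_smul_vecMulVec _ (by exact_mod_cast hp1),
    Real.sqrt_mul
      (div_nonneg (by rw [add_sub_assoc]; exact add_nonneg (by positivity) hdA1) (by positivity))]
  refine ⟨hbound, ?_⟩
  rw [hρ.2, Complex.one_re, mul_one, sub_nonneg]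
  exact hbound

/-- **Entanglement witness**: for a separable state `ρ`, any matrix `O` of operator norm at
most `1` (i.e. `I − O†O ⪰ 0`) satisfies
`Re Tr(O† M_{x,y}^{(n)}) ≤ √(((n x² + d_A − 1)/(κ_A d_A))((n y² + d_B − 1)/(κ_B d_B)))`;
in particular the witness functional is nonnegative on `ρ`. -/
theorem entanglement_witness_of_separable
    (dA dB : ℕ) (hdA : 2 ≤ dA) (hdB : 2 ≤ dB)
    (κA κB : ℝ) (hκA : 1 ≤ κA) (hκB : 1 ≤ κB)
    (GA : Fin (dA ^ 2 - 1) → Matrix (Fin dA) (Fin dA) ℂ)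
    (GB : Fin (dB ^ 2 - 1) → Matrix (Fin dB) (Fin dB) ℂ)
    (hGAtr : ∀ i, (GA i).trace = 0)
    (hGBtr : ∀ j, (GB j).trace = 0)
    (hGAorth : ∀ i j, ((GA i)ᴴ * GA j).trace = if i = j then (κA : ℂ) else 0)
    (hGBorth : ∀ i j, ((GB i)ᴴ * GB j).trace = if i = j then (κB : ℂ) else 0)
    (hGAspan : ∀ X : Matrix (Fin dA) (Fin dA) ℂ, X.trace = 0 →
      X ∈ Submodule.span ℂ (Set.range GA))
    (hGBspan : ∀ X : Matrix (Fin dB) (Fin dB) ℂ, X.trace = 0 →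
      X ∈ Submodule.span ℂ (Set.range GB))
    (ρ : Matrix (Fin dA × Fin dB) (Fin dA × Fin dB) ℂ)
    (hρ : IsDensityMatrix ρ)
    (hsep : IsSeparableState dA dB ρ)
    (r : Fin (dA ^ 2 - 1) → ℂ) (s : Fin (dB ^ 2 - 1) → ℂ)
    (T : Matrix (Fin (dA ^ 2 - 1)) (Fin (dB ^ 2 - 1)) ℂ)
    (hexp : ρ =
      ((dA : ℂ)⁻¹ • (1 : Matrix (Fin dA) (Fin dA) ℂ)) ⊗ₖ
        ((dB : ℂ)⁻¹ • (1 : Matrix (Fin dB) (Fin dB) ℂ))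
      + ∑ i, r i • (GA i ⊗ₖ ((dB : ℂ)⁻¹ • (1 : Matrix (Fin dB) (Fin dB) ℂ)))
      + ∑ j, s j • (((dA : ℂ)⁻¹ • (1 : Matrix (Fin dA) (Fin dA) ℂ)) ⊗ₖ GB j)
      + ∑ i, ∑ j, T i j • (GA i ⊗ₖ GB j))
    (x y : ℝ) (hx : 0 ≤ x) (hy : 0 ≤ y) (n : ℕ) (hn : 0 < n)
    (O : Matrix (Fin n ⊕ Fin (dA ^ 2 - 1)) (Fin n ⊕ Fin (dB ^ 2 - 1)) ℂ)
    (hO : ((1 : Matrix (Fin n ⊕ Fin (dB ^ 2 - 1)) (Fin n ⊕ Fin (dB ^ 2 - 1)) ℂ)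
      - Oᴴ * O).PosSemidef) :
    ((Oᴴ * extCorrTensor dA dB n κA κB x y r s T).trace).re ≤
      Real.sqrt (((n * x ^ 2 + dA - 1) / (κA * dA)) * ((n * y ^ 2 + dB - 1) / (κB * dB))) ∧
    0 ≤ Real.sqrt (((n * x ^ 2 + dA - 1) / (κA * dA)) *
          ((n * y ^ 2 + dB - 1) / (κB * dB))) * (ρ.trace).re
        - ((Oᴴ * extCorrTensor dA dB n κA κB x y r s T).trace).re :=
  entanglement_witness_of_separable_general dA dB hdA hdB κA κB hκA hκB GA GB hGAtr hGBtr hGAorth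
    hGBorth hGAspan hGBspan ρ hρ hsep r s T hexp x y n O hO
end

section
/- For d ≥ 2 and 0 ≤ p ≤ 1, consider the isotropic state ρ_p = ((1−p)/d²) I⊗I + p|ψ⁺⟩⟨ψ⁺| on ℂ^d⊗ℂ^d, with extended correlation tensor M_{x,y}^{(n)} computed with respect to the generalized Gell-Mann bases (κ_A = κ_B = 2). Then with n = 2 and x = y = √d, the inequality ‖M_{√d,√d}^{(2)}‖_tr ≤ (2d + d − 1)/(2d) of the separability criterion holds if and only if p ≤ 1/(d+1); consequently the criterion detects the entanglement of every entangled isotropic state. -/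
/-!
Pairing the isotropic state with product operators gives
`Tr(ρ_p (A ⊗ B)) = (1 - p)/d² Tr A Tr B + (p/d) Tr(A Bᵀ)`; testing its Bloch expansion against
`l a ⊗ 1`, `1 ⊗ l b` and `l a ⊗ l b` shows `r = s = 0` and `T = (p/2d) C`, where `C` is the
matrix of transposition on traceless matrices in the basis `l`. Transposition is an involution
and `C` is Hermitian, so `C` is unitary. Hence `M` is block diagonal, with a constant block
`1/2` of trace norm `1` and the block `(p/2d) C` of trace norm `(d² - 1) p/(2d)`; the criterion
becomes `1 + (d² - 1) p/(2d) ≤ (3d - 1)/(2d)`, that is `p ≤ 1/(d + 1)`.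
Trace norms are computed as the trace of the positive square root of `Xᴴ X`.
-/

open Matrix BigOperators Kronecker

/-- The extended correlation tensor `M_{x,y}^{(n)}` for the Gell-Mann bases (`κ = 2`) on
`ℂ^d ⊗ ℂ^d`. -/
noncomputable def extCorrTensorGM (d n : ℕ) (x y : ℝ)
    (r s : Fin (d ^ 2 - 1) → ℂ)
    (T : Matrix (Fin (d ^ 2 - 1)) (Fin (d ^ 2 - 1)) ℂ) :
    Matrix (Fin n ⊕ Fin (d ^ 2 - 1)) (Fin n ⊕ Fin (d ^ 2 - 1)) ℂ :=
  Matrix.fromBlocks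
    (Matrix.of fun _ _ => ((x * y / (2 * d) : ℝ) : ℂ))
    (Matrix.of fun _ j => ((x / Real.sqrt (2 * d) : ℝ) : ℂ) * s j)
    (Matrix.of fun i _ => ((y / Real.sqrt (2 * d) : ℝ) : ℂ) * r i)
    T

/-- The projector `|ψ⁺⟩⟨ψ⁺|` onto the maximally entangled state. -/
noncomputable def maxEntProj (d : ℕ) : Matrix (Fin d × Fin d) (Fin d × Fin d) ℂ :=
  Matrix.of fun p q => if p.1 = p.2 ∧ q.1 = q.2 then ((d : ℂ))⁻¹ else 0

open scoped MatrixOrder ComplexOrder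

lemma Matrix.trace_fromBlocks {m n R : Type*} [Fintype m] [Fintype n] [AddCommMonoid R]
    (A : Matrix m m R) (B : Matrix m n R) (C : Matrix n m R) (D : Matrix n n R) :
    (fromBlocks A B C D).trace = A.trace + D.trace := by
  simp [trace, Fintype.sum_sum_type]

lemma Matrix.PosSemidef.fromBlocks_zero {𝕜 m n : Type*} [RCLike 𝕜] [Fintype m] [Fintype n]
    [DecidableEq m] [DecidableEq n] {P : Matrix m m 𝕜} {Q : Matrix n n 𝕜}
    (hP : P.PosSemidef) (hQ : Q.PosSemidef) : (fromBlocks P 0 0 Q).PosSemidef := by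
  obtain ⟨S, rfl⟩ := CStarAlgebra.nonneg_iff_eq_star_mul_self.mp hP.nonneg
  obtain ⟨R, rfl⟩ := CStarAlgebra.nonneg_iff_eq_star_mul_self.mp hQ.nonneg
  simpa [star_eq_conjTranspose, fromBlocks_conjTranspose, fromBlocks_multiply] using
    posSemidef_conjTranspose_mul_self (fromBlocks S 0 0 R)

section TraceNorm

variable {m k m' k' : Type*} [Fintype m] [Fintype k] [DecidableEq k] [Fintype m'] [Fintype k']
  [DecidableEq k']

lemma traceNorm_eq_trace_of_mul_self_eq (X : Matrix m k ℂ) {B : Matrix k k ℂ}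
    (hB : B.PosSemidef) (hBX : B * B = Xᴴ * X) : (traceNorm X : ℂ) = B.trace := by
  have hA := isHermitian_conjTranspose_mul_self X
  have hsqrt : cfc Real.sqrt (Xᴴ * X) = B := by
    rw [← cfcₙ_eq_cfc, ← CFC.sqrt_eq_real_sqrt _ (posSemidef_conjTranspose_mul_self X).nonneg]
    exact CFC.sqrt_unique hBX hB.nonneg
  rw [← hsqrt, hA.cfc_eq, IsHermitian.cfc, Unitary.conjStarAlgAut_apply, trace_mul_cycle,
    Unitary.coe_star_mul_self, Matrix.one_mul, trace_diagonal, traceNorm]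
  simp

lemma ofReal_traceNorm_eq_trace_sqrt (X : Matrix m k ℂ) :
    (traceNorm X : ℂ) = (CFC.sqrt (Xᴴ * X)).trace :=
  traceNorm_eq_trace_of_mul_self_eq X (CFC.sqrt_nonneg _).posSemidef
    (CFC.sqrt_mul_sqrt_self _ (posSemidef_conjTranspose_mul_self X).nonneg)

lemma traceNorm_fromBlocks_zero (A : Matrix m k ℂ) (D : Matrix m' k' ℂ) :
    traceNorm (fromBlocks A 0 0 D) = traceNorm A + traceNorm D := by
  have h := traceNorm_eq_trace_of_mul_self_eq (fromBlocks A 0 0 D)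
    ((CFC.sqrt_nonneg (Aᴴ * A)).posSemidef.fromBlocks_zero (CFC.sqrt_nonneg (Dᴴ * D)).posSemidef)
    (by rw [fromBlocks_conjTranspose, fromBlocks_multiply, fromBlocks_multiply,
          CFC.sqrt_mul_sqrt_self _ (posSemidef_conjTranspose_mul_self A).nonneg,
          CFC.sqrt_mul_sqrt_self _ (posSemidef_conjTranspose_mul_self D).nonneg]
        simp)
  rw [trace_fromBlocks, ← ofReal_traceNorm_eq_trace_sqrt, ← ofReal_traceNorm_eq_trace_sqrt] at h
  exact_mod_cast h

lemma traceNorm_of_posSemidef {A : Matrix k k ℂ} (hA : A.PosSemidef) :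
    (traceNorm A : ℂ) = A.trace :=
  traceNorm_eq_trace_of_mul_self_eq A hA (by rw [hA.isHermitian.eq])

lemma traceNorm_const {c : ℝ} (hc : 0 ≤ c) :
    traceNorm (of fun _ _ : k => (c : ℂ)) = Fintype.card k * c := by
  have hconst : (of fun _ _ : k => (c : ℂ)) = (c : ℂ) • vecMulVec 1 (star 1) := by
    ext i j
    simp
  have h := traceNorm_of_posSemidef
    (hconst ▸ (posSemidef_vecMulVec_self_star (1 : k → ℂ)).smul (by exact_mod_cast hc))
  simp only [trace, diag, of_apply, Finset.sum_const, Finset.card_univ, nsmul_eq_mul] at h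
  exact_mod_cast h

lemma traceNorm_smul_of_conjTranspose_mul_self {U : Matrix k k ℂ} (hU : Uᴴ * U = 1) {t : ℝ}
    (ht : 0 ≤ t) : traceNorm ((t : ℂ) • U) = t * Fintype.card k := by
  have h := traceNorm_eq_trace_of_mul_self_eq ((t : ℂ) • U) (B := (t : ℂ) • 1)
    (PosSemidef.one.smul (by exact_mod_cast ht))
    (by rw [conjTranspose_smul, smul_mul_smul_comm, smul_mul_smul_comm, hU, one_mul,
          Complex.star_def, Complex.conj_ofReal])
  rw [trace_smul, trace_one, smul_eq_mul] at h
  exact_mod_cast h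

end TraceNorm

section OrthonormalBasis

variable {ι n : Type*} [Fintype n] {l : ι → Matrix n n ℂ}

/-- For an orthonormal basis `l` of the traceless matrices (with `Tr (l i * l j) = 2 δ i j`),
`transposeCoeffs l` is the matrix of `X ↦ Xᵀ` in that basis. -/
noncomputable def transposeCoeffs (l : ι → Matrix n n ℂ) : Matrix ι ι ℂ :=
  of fun a b => (l a * (l b)ᵀ).trace / 2

lemma transposeCoeffs_conjTranspose (hherm : ∀ i, (l i).IsHermitian) :
    (transposeCoeffs l)ᴴ = transposeCoeffs l := by
  ext a b
  simp only [transposeCoeffs, conjTranspose_apply, of_apply, star_div₀, star_ofNat]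
  rw [← trace_conjTranspose, conjTranspose_mul, conjTranspose_transpose_eq_transpose_conjTranspose,
    (hherm a).eq, (hherm b).eq, ← trace_transpose, transpose_mul, transpose_transpose,
    trace_mul_comm]

variable [Fintype ι] [DecidableEq ι]

lemma sum_trace_mul_div_two_smul_eq
    (horth : ∀ i j, (l i * l j).trace = if i = j then (2 : ℂ) else 0)
    (hspan : ∀ X : Matrix n n ℂ, X.trace = 0 → X ∈ Submodule.span ℂ (Set.range l))
    {X : Matrix n n ℂ} (hX : X.trace = 0) :
    ∑ i, ((l i * X).trace / 2) • l i = X := by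
  obtain ⟨c, rfl⟩ := (Submodule.mem_span_range_iff_exists_fun ℂ).mp (hspan X hX)
  refine Finset.sum_congr rfl fun i _ => ?_
  simp [Finset.mul_sum, horth]

lemma transposeCoeffs_mul_self (htr : ∀ i, (l i).trace = 0)
    (horth : ∀ i j, (l i * l j).trace = if i = j then (2 : ℂ) else 0)
    (hspan : ∀ X : Matrix n n ℂ, X.trace = 0 → X ∈ Submodule.span ℂ (Set.range l)) :
    transposeCoeffs l * transposeCoeffs l = 1 := by
  ext a b
  have hexp : ∑ j, transposeCoeffs l j b • l j = (l b)ᵀ :=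
    sum_trace_mul_div_two_smul_eq horth hspan (by rw [trace_transpose, htr])
  calc (transposeCoeffs l * transposeCoeffs l) a b
      = (l a * (∑ j, transposeCoeffs l j b • l j)ᵀ).trace / 2 := by
        simp only [mul_apply, transpose_sum, transpose_smul, Matrix.mul_sum, Matrix.mul_smul,
          trace_sum, trace_smul, smul_eq_mul, Finset.sum_div, transposeCoeffs, of_apply]
        exact Finset.sum_congr rfl fun j _ => by ring
    _ = (1 : Matrix ι ι ℂ) a b := by
        rw [hexp, transpose_transpose, horth, one_apply]
        split_ifs <;> norm_num

end OrthonormalBasis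

section IsotropicState

variable {d : ℕ}

lemma trace_maxEntProj_mul_kronecker (A B : Matrix (Fin d) (Fin d) ℂ) :
    (maxEntProj d * (A ⊗ₖ B)).trace = (d : ℂ)⁻¹ * (A * Bᵀ).trace := by
  simp only [trace, diag, mul_apply, maxEntProj, of_apply, kroneckerMap_apply, transpose_apply,
    Fintype.sum_prod_type, ite_mul, zero_mul, Finset.mul_sum, ite_and, Finset.sum_ite_irrel,
    Finset.sum_ite_eq, Finset.mem_univ, ↓reduceIte, Finset.sum_const_zero]
  exact Finset.sum_comm

variable (d) in
noncomputable def isotropicState (p : ℝ) : Matrix (Fin d × Fin d) (Fin d × Fin d) ℂ :=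
  (((1 - p) / (d : ℝ) ^ 2 : ℝ) : ℂ) • (1 : Matrix (Fin d × Fin d) (Fin d × Fin d) ℂ)
    + ((p : ℝ) : ℂ) • maxEntProj d

lemma trace_isotropicState_mul_kronecker (p : ℝ) (A B : Matrix (Fin d) (Fin d) ℂ) :
    (isotropicState d p * (A ⊗ₖ B)).trace =
      (((1 - p) / (d : ℝ) ^ 2 : ℝ) : ℂ) * (A.trace * B.trace)
        + p * ((d : ℂ)⁻¹ * (A * Bᵀ).trace) := by
  rw [isotropicState, Matrix.add_mul, trace_add, Matrix.smul_mul, Matrix.smul_mul, trace_smul,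
    trace_smul, Matrix.one_mul, trace_kronecker, trace_maxEntProj_mul_kronecker, smul_eq_mul,
    smul_eq_mul]

variable {ι : Type*} [Fintype ι]

noncomputable def blochExpansion (l : ι → Matrix (Fin d) (Fin d) ℂ) (r s : ι → ℂ)
    (T : Matrix ι ι ℂ) : Matrix (Fin d × Fin d) (Fin d × Fin d) ℂ :=
  ((d : ℂ)⁻¹ • (1 : Matrix (Fin d) (Fin d) ℂ)) ⊗ₖ
      ((d : ℂ)⁻¹ • (1 : Matrix (Fin d) (Fin d) ℂ))
    + ∑ i, r i • (l i ⊗ₖ ((d : ℂ)⁻¹ • (1 : Matrix (Fin d) (Fin d) ℂ)))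
    + ∑ j, s j • (((d : ℂ)⁻¹ • (1 : Matrix (Fin d) (Fin d) ℂ)) ⊗ₖ l j)
    + ∑ i, ∑ j, T i j • (l i ⊗ₖ l j)

lemma trace_blochExpansion_mul_kronecker (l : ι → Matrix (Fin d) (Fin d) ℂ) (r s : ι → ℂ)
    (T : Matrix ι ι ℂ) (A B : Matrix (Fin d) (Fin d) ℂ) :
    (blochExpansion l r s T * (A ⊗ₖ B)).trace =
      (d : ℂ)⁻¹ * A.trace * ((d : ℂ)⁻¹ * B.trace)
        + ∑ i, r i * ((l i * A).trace * ((d : ℂ)⁻¹ * B.trace))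
        + ∑ j, s j * ((d : ℂ)⁻¹ * A.trace * (l j * B).trace)
        + ∑ i, ∑ j, T i j * ((l i * A).trace * (l j * B).trace) := by
  simp only [blochExpansion, Matrix.add_mul, Matrix.sum_mul, Matrix.smul_mul, trace_add,
    trace_sum, trace_smul, ← mul_kronecker_mul, trace_kronecker, Matrix.one_mul, smul_eq_mul]

lemma blochCoeffs_of_isotropicState_eq [DecidableEq ι] {l : ι → Matrix (Fin d) (Fin d) ℂ}
    (hd : d ≠ 0) (htr : ∀ i, (l i).trace = 0)
    (horth : ∀ i j, (l i * l j).trace = if i = j then (2 : ℂ) else 0)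
    {p : ℝ} {r s : ι → ℂ} {T : Matrix ι ι ℂ}
    (h : isotropicState d p = blochExpansion l r s T) :
    r = 0 ∧ s = 0 ∧ T = ((p / (2 * d) : ℝ) : ℂ) • transposeCoeffs l := by
  have pairing : ∀ A B, (isotropicState d p * (A ⊗ₖ B)).trace
      = (blochExpansion l r s T * (A ⊗ₖ B)).trace := fun A B => by rw [h]
  simp only [trace_isotropicState_mul_kronecker, trace_blochExpansion_mul_kronecker] at pairing
  have hd' : (d : ℂ) ≠ 0 := Nat.cast_ne_zero.mpr hd
  refine ⟨funext fun a => ?_, funext fun b => ?_, ext fun a b => ?_⟩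
  · simpa [htr, horth, hd'] using pairing (l a) 1
  · simpa [htr, horth, hd'] using pairing 1 (l b)
  · have h4T := pairing (l a) (l b)
    simp only [htr, horth, mul_zero, zero_mul, zero_add, add_zero, Finset.sum_const_zero,
      mul_ite, ite_mul, ite_self, Finset.sum_ite_eq', Finset.mem_univ, ↓reduceIte] at h4T
    rw [Matrix.smul_apply, smul_eq_mul, transposeCoeffs, of_apply]
    push_cast
    linear_combination -h4T / 4

end IsotropicState

lemma extCorrTensorGM_zero_zero (d n : ℕ) (x y : ℝ)
    (T : Matrix (Fin (d ^ 2 - 1)) (Fin (d ^ 2 - 1)) ℂ) :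
    extCorrTensorGM d n x y 0 0 T = fromBlocks (of fun _ _ => ((x * y / (2 * d) : ℝ) : ℂ)) 0 0 T := by
  simp only [extCorrTensorGM, Pi.zero_apply, mul_zero]
  rfl

theorem isotropic_criterion_iff_general
    (d : ℕ) (hd : 2 ≤ d) (p : ℝ) (hp : 0 ≤ p)
    (l : Fin (d ^ 2 - 1) → Matrix (Fin d) (Fin d) ℂ)
    (hherm : ∀ i, (l i).IsHermitian)
    (htr : ∀ i, (l i).trace = 0)
    (horth : ∀ i j, (l i * l j).trace = if i = j then (2 : ℂ) else 0)
    (hspan : ∀ X : Matrix (Fin d) (Fin d) ℂ, X.trace = 0 →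
      X ∈ Submodule.span ℂ (Set.range l))
    (r s : Fin (d ^ 2 - 1) → ℂ)
    (T : Matrix (Fin (d ^ 2 - 1)) (Fin (d ^ 2 - 1)) ℂ)
    (ρ : Matrix (Fin d × Fin d) (Fin d × Fin d) ℂ)
    (hρ : ρ = (((1 - p) / (d : ℝ) ^ 2 : ℝ) : ℂ) •
        (1 : Matrix (Fin d × Fin d) (Fin d × Fin d) ℂ) + ((p : ℝ) : ℂ) • maxEntProj d)
    (hexp : ρ =
      ((d : ℂ)⁻¹ • (1 : Matrix (Fin d) (Fin d) ℂ)) ⊗ₖ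
        ((d : ℂ)⁻¹ • (1 : Matrix (Fin d) (Fin d) ℂ))
      + ∑ i, r i • (l i ⊗ₖ ((d : ℂ)⁻¹ • (1 : Matrix (Fin d) (Fin d) ℂ)))
      + ∑ j, s j • (((d : ℂ)⁻¹ • (1 : Matrix (Fin d) (Fin d) ℂ)) ⊗ₖ l j)
      + ∑ i, ∑ j, T i j • (l i ⊗ₖ l j))
 :
    traceNorm (extCorrTensorGM d 2 (Real.sqrt d) (Real.sqrt d) r s T) ≤
        (2 * d + d - 1) / (2 * d) ↔
      p ≤ 1 / (d + 1) := by
  obtain ⟨rfl, rfl, rfl⟩ :=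
    blochCoeffs_of_isotropicState_eq (by omega) htr horth (hρ.symm.trans hexp)
  have hC : (transposeCoeffs l)ᴴ * transposeCoeffs l = 1 := by
    rw [transposeCoeffs_conjTranspose hherm, transposeCoeffs_mul_self htr horth hspan]
  have hdR : (2 : ℝ) ≤ d := by exact_mod_cast hd
  rw [extCorrTensorGM_zero_zero, traceNorm_fromBlocks_zero, traceNorm_const (by positivity),
    traceNorm_smul_of_conjTranspose_mul_self hC (by positivity), Real.mul_self_sqrt (by positivity),
    Fintype.card_fin, Fintype.card_fin, Nat.cast_sub (by nlinarith), Nat.cast_pow, Nat.cast_one]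
  have hnorm : ((2 : ℕ) : ℝ) * (d / (2 * d)) + p / (2 * d) * (d ^ 2 - 1)
      = 1 + (d - 1) * (d + 1) * p / (2 * d) := by
    field_simp
    ring
  rw [hnorm, le_div_iff₀ (by positivity), le_div_iff₀ (by positivity), add_mul,
    div_mul_cancel₀ _ (by positivity)]
  constructor <;> intro h <;> nlinarith

/-- **Isotropic states**: with `n = 2` and `x = y = √d`, the separability-criterion inequality
`‖M_{√d,√d}^{(2)}‖_tr ≤ (2d + d − 1)/(2d)` holds iff `p ≤ 1/(d+1)`. -/
theorem isotropic_criterion_iff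
    (d : ℕ) (hd : 2 ≤ d) (p : ℝ) (hp : 0 ≤ p) (hp1 : p ≤ 1)
    (l : Fin (d ^ 2 - 1) → Matrix (Fin d) (Fin d) ℂ)
    (hherm : ∀ i, (l i).IsHermitian)
    (htr : ∀ i, (l i).trace = 0)
    (horth : ∀ i j, (l i * l j).trace = if i = j then (2 : ℂ) else 0)
    (hspan : ∀ X : Matrix (Fin d) (Fin d) ℂ, X.trace = 0 →
      X ∈ Submodule.span ℂ (Set.range l))
    (r s : Fin (d ^ 2 - 1) → ℂ)
    (T : Matrix (Fin (d ^ 2 - 1)) (Fin (d ^ 2 - 1)) ℂ)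
    (ρ : Matrix (Fin d × Fin d) (Fin d × Fin d) ℂ)
    (hρ : ρ = (((1 - p) / (d : ℝ) ^ 2 : ℝ) : ℂ) •
        (1 : Matrix (Fin d × Fin d) (Fin d × Fin d) ℂ) + ((p : ℝ) : ℂ) • maxEntProj d)
    (hexp : ρ =
      ((d : ℂ)⁻¹ • (1 : Matrix (Fin d) (Fin d) ℂ)) ⊗ₖ
        ((d : ℂ)⁻¹ • (1 : Matrix (Fin d) (Fin d) ℂ))
      + ∑ i, r i • (l i ⊗ₖ ((d : ℂ)⁻¹ • (1 : Matrix (Fin d) (Fin d) ℂ)))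
      + ∑ j, s j • (((d : ℂ)⁻¹ • (1 : Matrix (Fin d) (Fin d) ℂ)) ⊗ₖ l j)
      + ∑ i, ∑ j, T i j • (l i ⊗ₖ l j))
 :
    traceNorm (extCorrTensorGM d 2 (Real.sqrt d) (Real.sqrt d) r s T) ≤
        (2 * d + d - 1) / (2 * d) ↔
      p ≤ 1 / (d + 1) :=
  isotropic_criterion_iff_general d hd p hp l hherm htr horth hspan r s T ρ hρ hexp
end
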